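/- arXiv:1609.09173 — 6 statements merged into one kernel-verified Lean document; each statement's English description precedes it below -/
import Mathlib

section
/- Let U and V be nonempty sets, f : U × V → ℝ bounded, and p ∈ [0,1]. Then the sup–inf value of the randomized-priority game equals the convex combination of the lower and upper values: sup over pairs (u, α) with u ∈ U, α : V → U, of the inf over pairs (v, β) with v ∈ V, β : U → V, of [p·f(u, β(u)) + (1−p)·f(α(v), v)] equals f^p := p·f⁻ + (1−p)·f⁺. -/
open Set

set_option maxHeartbeats 1000000

private lemma bddA {A : Type*} {g : A → ℝ} {C : ℝ} (h : ∀ a, g a ≤ C) :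
    BddAbove (range g) := ⟨C, by rintro _ ⟨a, rfl⟩; exact h a⟩

private lemma bddB {A : Type*} {g : A → ℝ} {C : ℝ} (h : ∀ a, C ≤ g a) :
    BddBelow (range g) := ⟨C, by rintro _ ⟨a, rfl⟩; exact h a⟩

/-- inf over a product of a sum of independent terms. -/
private lemma inf_prod_add {A B : Type*} [Nonempty A] [Nonempty B]
    (g : A → ℝ) (h : B → ℝ) (hg : BddBelow (range g)) (hh : BddBelow (range h)) :
    (⨅ x : A × B, (g x.1 + h x.2)) = (⨅ a, g a) + ⨅ b, h b := by
  obtain ⟨cg, hcg⟩ := hg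
  obtain ⟨ch, hch⟩ := hh
  have hbdd : BddBelow (range fun x : A × B => g x.1 + h x.2) := by
    refine ⟨cg + ch, ?_⟩
    rintro _ ⟨x, rfl⟩
    exact add_le_add (hcg ⟨x.1, rfl⟩) (hch ⟨x.2, rfl⟩)
  apply le_antisymm
  · apply le_of_forall_pos_le_add
    intro ε hε
    obtain ⟨a, ha⟩ := exists_lt_of_ciInf_lt (f := g) (lt_add_of_pos_right _ (half_pos hε))
    obtain ⟨b, hb⟩ := exists_lt_of_ciInf_lt (f := h) (lt_add_of_pos_right _ (half_pos hε))
    have h1 : (⨅ x : A × B, (g x.1 + h x.2)) ≤ g a + h b := ciInf_le hbdd (a, b)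
    have h2 : g a + h b ≤ ((⨅ a, g a) + ⨅ b, h b) + ε := by linarith
    linarith
  · exact le_ciInf fun x => add_le_add (ciInf_le ⟨cg, hcg⟩ x.1) (ciInf_le ⟨ch, hch⟩ x.2)

/-- sup over a product of a sum of independent terms. -/
private lemma sup_prod_add {A B : Type*} [Nonempty A] [Nonempty B]
    (g : A → ℝ) (h : B → ℝ) (hg : BddAbove (range g)) (hh : BddAbove (range h)) :
    (⨆ x : A × B, (g x.1 + h x.2)) = (⨆ a, g a) + ⨆ b, h b := by
  obtain ⟨cg, hcg⟩ := hg
  obtain ⟨ch, hch⟩ := hh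
  have hbdd : BddAbove (range fun x : A × B => g x.1 + h x.2) := by
    refine ⟨cg + ch, ?_⟩
    rintro _ ⟨x, rfl⟩
    exact add_le_add (hcg ⟨x.1, rfl⟩) (hch ⟨x.2, rfl⟩)
  apply le_antisymm
  · exact ciSup_le fun x => add_le_add (le_ciSup ⟨cg, hcg⟩ x.1) (le_ciSup ⟨ch, hch⟩ x.2)
  · apply le_of_forall_pos_le_add
    intro ε hε
    obtain ⟨a, ha⟩ := exists_lt_of_lt_ciSup (f := g) (sub_lt_self _ (half_pos hε))
    obtain ⟨b, hb⟩ := exists_lt_of_lt_ciSup (f := h) (sub_lt_self _ (half_pos hε))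
    have h1 : g a + h b ≤ ⨆ x : A × B, (g x.1 + h x.2) := le_ciSup hbdd (a, b)
    linarith

/-- infimum along a surjective reindexing. -/
private lemma ciInf_comp_surj {A B : Type*} [Nonempty A] (g : B → ℝ) (h : A → B)
    (hs : Function.Surjective h) (hb : BddBelow (range g)) :
    (⨅ a, g (h a)) = ⨅ b, g b := by
  have : Nonempty B := Nonempty.map h inferInstance
  have hb' : BddBelow (range fun a => g (h a)) := by
    obtain ⟨c, hc⟩ := hb
    exact ⟨c, by rintro _ ⟨a, rfl⟩; exact hc ⟨h a, rfl⟩⟩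
  apply le_antisymm
  · refine le_ciInf fun b => ?_
    obtain ⟨a, rfl⟩ := hs b
    exact ciInf_le hb' a
  · exact le_ciInf fun a => ciInf_le hb (h a)

/-- The sup–inf value of the randomized-priority one-shot game equals the
convex combination `f^p = p·f⁻ + (1-p)·f⁺` of the lower and upper values. -/
theorem stmt2 {U V : Type*} [Nonempty U] [Nonempty V] (f : U → V → ℝ)
    (hf : ∃ C : ℝ, ∀ u v, |f u v| ≤ C)
    (p : ℝ) (hp0 : 0 ≤ p) (hp1 : p ≤ 1) :
    (⨆ x : U × (V → U), ⨅ y : V × (U → V),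
        (p * f x.1 (y.2 x.1) + (1 - p) * f (x.2 y.1) y.1))
      = p * (⨆ u : U, ⨅ v : V, f u v) + (1 - p) * (⨅ v : V, ⨆ u : U, f u v) := by
  obtain ⟨C, hC⟩ := hf
  have hq0 : (0:ℝ) ≤ 1 - p := by linarith
  have hfl : ∀ u v, -C ≤ f u v := fun u v => neg_le_of_abs_le (hC u v)
  have hfu : ∀ u v, f u v ≤ C := fun u v => le_of_abs_le (hC u v)
  have hmu : ∀ u, (⨅ v, f u v) ≤ C := fun u =>
    (ciInf_le (bddB (hfl u)) (Classical.arbitrary V)).trans (hfu u _)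
  have hsl : ∀ v, -C ≤ ⨆ u, f u v := fun v =>
    (hfl (Classical.arbitrary U) v).trans (le_ciSup (bddA fun u => hfu u v) _)
  -- Step 1: compute the inner infimum for fixed (u, α)
  have step1 : ∀ u : U, ∀ α : V → U,
      (⨅ y : V × (U → V), (p * f u (y.2 u) + (1 - p) * f (α y.1) y.1))
        = (1 - p) * (⨅ v, f (α v) v) + p * (⨅ w, f u w) := by
    intro u α
    have key := inf_prod_add (fun v : V => (1 - p) * f (α v) v)
      (fun β : U → V => p * f u (β u))
      (bddB fun v => mul_le_mul_of_nonneg_left (hfl _ _) hq0)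
      (bddB fun β => mul_le_mul_of_nonneg_left (hfl _ _) hp0)
    have e0 : (⨅ y : V × (U → V), (p * f u (y.2 u) + (1 - p) * f (α y.1) y.1))
        = ⨅ y : V × (U → V), ((1 - p) * f (α y.1) y.1 + p * f u (y.2 u)) := by
      congr 1; ext y; ring
    rw [e0, key]
    congr 1
    · rw [Real.mul_iInf_of_nonneg hq0]
    · rw [Real.mul_iInf_of_nonneg hp0]
      exact ciInf_comp_surj (fun w : V => p * f u w) (fun β : U → V => β u)
        (fun w => ⟨fun _ => w, rfl⟩)
        (bddB fun w => mul_le_mul_of_nonneg_left (hfl _ _) hp0)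
  -- Step 2: sup over counter-strategies α of inf_v f (α v) v equals f⁺
  have step2 : (⨆ α : V → U, ⨅ v, f (α v) v) = ⨅ v : V, ⨆ u : U, f u v := by
    have hbddsup : BddAbove (range fun α : V → U => ⨅ v, f (α v) v) :=
      bddA fun α => (ciInf_le (bddB fun v => hfl _ _) (Classical.arbitrary V)).trans (hfu _ _)
    apply le_antisymm
    · refine ciSup_le fun α => le_ciInf fun v =>
        (ciInf_le (bddB fun v => hfl _ _) v).trans
          (le_ciSup (bddA fun u => hfu u v) (α v))
    · apply le_of_forall_pos_le_add
      intro ε hε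
      have h1 : ∀ v : V, ∃ u : U, (⨅ v : V, ⨆ u : U, f u v) - ε < f u v := by
        intro v
        have h2 : (⨅ v : V, ⨆ u : U, f u v) - ε < ⨆ u : U, f u v := by
          have := ciInf_le (bddB hsl) v
          linarith
        exact exists_lt_of_lt_ciSup h2
      choose α hα using h1
      have h3 : (⨅ v : V, ⨆ u : U, f u v) - ε ≤ ⨅ v, f (α v) v :=
        le_ciInf fun v => (hα v).le
      have h4 : (⨅ v, f (α v) v) ≤ ⨆ α : V → U, ⨅ v, f (α v) v := le_ciSup hbddsup α
      linarith
  -- Combine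
  have e1 : (⨆ x : U × (V → U), ⨅ y : V × (U → V),
        (p * f x.1 (y.2 x.1) + (1 - p) * f (x.2 y.1) y.1))
      = ⨆ x : U × (V → U), ((fun u : U => p * ⨅ w, f u w) x.1
          + (fun α : V → U => (1 - p) * ⨅ v, f (α v) v) x.2) := by
    congr 1; ext x; rw [step1 x.1 x.2]; ring
  rw [e1, sup_prod_add (fun u : U => p * ⨅ w, f u w)
      (fun α : V → U => (1 - p) * ⨅ v, f (α v) v)
      (bddA fun u => mul_le_mul_of_nonneg_left (hmu u) hp0)
      (bddA fun α => mul_le_mul_of_nonneg_left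
        ((ciInf_le (bddB fun v => hfl _ _) (Classical.arbitrary V)).trans (hfu _ _)) hq0),
    ← Real.mul_iSup_of_nonneg hp0, ← Real.mul_iSup_of_nonneg hq0, step2]
end

section
/- Let U and V be nonempty sets, f : U × V → ℝ bounded, and p ∈ [0,1]. Then the inf–sup value of the randomized-priority game equals the convex combination of the lower and upper values: inf over pairs (v, β) with v ∈ V, β : U → V, of the sup over pairs (u, α) with u ∈ U, α : V → U, of [p·f(u, β(u)) + (1−p)·f(α(v), v)] equals f^p := p·f⁻ + (1−p)·f⁺. In particular, combined with the sup–inf identity, the randomized-priority game has a value f^p. -/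
/-- The inf–sup value of the randomized-priority one-shot game equals the
convex combination `f^p = p·f⁻ + (1-p)·f⁺`; combined with the sup–inf
identity, the randomized-priority game has a value `f^p`. -/
theorem stmt3 {U V : Type*} [Nonempty U] [Nonempty V] (f : U → V → ℝ)
    (hf : ∃ C : ℝ, ∀ u v, |f u v| ≤ C)
    (p : ℝ) (hp0 : 0 ≤ p) (hp1 : p ≤ 1) :
    ((⨅ y : V × (U → V), ⨆ x : U × (V → U),
        (p * f x.1 (y.2 x.1) + (1 - p) * f (x.2 y.1) y.1))
      = p * (⨆ u : U, ⨅ v : V, f u v) + (1 - p) * (⨅ v : V, ⨆ u : U, f u v)) ∧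
    ((⨆ x : U × (V → U), ⨅ y : V × (U → V),
        (p * f x.1 (y.2 x.1) + (1 - p) * f (x.2 y.1) y.1))
      = (⨅ y : V × (U → V), ⨆ x : U × (V → U),
        (p * f x.1 (y.2 x.1) + (1 - p) * f (x.2 y.1) y.1))) := by
  obtain ⟨C, hC⟩ := hf
  have hq0 : (0:ℝ) ≤ 1 - p := by linarith
  set L := ⨆ u : U, ⨅ v : V, f u v with hLdef
  set M := ⨅ v : V, ⨆ u : U, f u v with hMdef
  have hfub : ∀ u v, f u v ≤ C := fun u v => (abs_le.mp (hC u v)).2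
  have hflb : ∀ u v, -C ≤ f u v := fun u v => (abs_le.mp (hC u v)).1
  have bddB_f : ∀ u, BddBelow (Set.range fun v => f u v) := fun u =>
    ⟨-C, by rintro _ ⟨v, rfl⟩; exact hflb u v⟩
  have bddA_f : ∀ v, BddAbove (Set.range fun u => f u v) := fun v =>
    ⟨C, by rintro _ ⟨u, rfl⟩; exact hfub u v⟩
  have hinf_le : ∀ u v, (⨅ v', f u v') ≤ f u v := fun u v => ciInf_le (bddB_f u) v
  have hle_sup : ∀ u v, f u v ≤ ⨆ u', f u' v := fun u v => le_ciSup (bddA_f v) u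
  have bddA_inf : BddAbove (Set.range fun u => ⨅ v, f u v) :=
    ⟨C, by rintro _ ⟨u, rfl⟩; exact (hinf_le u (Classical.arbitrary V)).trans (hfub _ _)⟩
  have bddB_sup : BddBelow (Set.range fun v => ⨆ u, f u v) :=
    ⟨-C, by rintro _ ⟨v, rfl⟩; exact (hflb (Classical.arbitrary U) v).trans (hle_sup _ _)⟩
  have hL_le : ∀ u, (⨅ v, f u v) ≤ L := fun u => le_ciSup bddA_inf u
  have hM_le : ∀ v, M ≤ ⨆ u, f u v := fun v => ciInf_le bddB_sup v
  set F : U × (V → U) → V × (U → V) → ℝ :=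
    fun x y => p * f x.1 (y.2 x.1) + (1 - p) * f (x.2 y.1) y.1 with hF
  have hFub : ∀ x y, F x y ≤ C := by
    intro x y
    have h1 := hfub x.1 (y.2 x.1); have h2 := hfub (x.2 y.1) y.1
    simp only [hF]; nlinarith
  have hFlb : ∀ x y, -C ≤ F x y := by
    intro x y
    have h1 := hflb x.1 (y.2 x.1); have h2 := hflb (x.2 y.1) y.1
    simp only [hF]; nlinarith
  have bddA_F : ∀ y, BddAbove (Set.range fun x => F x y) := fun y =>
    ⟨C, by rintro _ ⟨x, rfl⟩; exact hFub x y⟩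
  have bddB_F : ∀ x, BddBelow (Set.range fun y => F x y) := fun x =>
    ⟨-C, by rintro _ ⟨y, rfl⟩; exact hFlb x y⟩
  have bddB_supF : BddBelow (Set.range fun y => ⨆ x, F x y) := by
    refine ⟨-C, ?_⟩
    rintro _ ⟨y, rfl⟩
    exact (hFlb (Classical.arbitrary _) y).trans (le_ciSup (bddA_F y) _)
  have bddA_infF : BddAbove (Set.range fun x => ⨅ y, F x y) := by
    refine ⟨C, ?_⟩
    rintro _ ⟨x, rfl⟩
    exact (ciInf_le (bddB_F x) (Classical.arbitrary _)).trans (hFub x _)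
  have key1 : (⨅ y : V × (U → V), ⨆ x : U × (V → U), F x y) = p * L + (1 - p) * M := by
    apply le_antisymm
    · apply le_of_forall_pos_le_add
      intro ε hε
      obtain ⟨v0, hv0⟩ : ∃ v, (⨆ u, f u v) < M + ε :=
        exists_lt_of_ciInf_lt (lt_add_of_pos_right _ hε)
      have hβ : ∀ u, ∃ v, f u v < (⨅ v', f u v') + ε := fun u =>
        exists_lt_of_ciInf_lt (lt_add_of_pos_right _ hε)
      choose β hβ' using hβ
      have hsup : (⨆ x : U × (V → U), F x (v0, β)) ≤ p * L + (1 - p) * M + ε := by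
        apply ciSup_le
        intro x
        have h1 : f x.1 (β x.1) ≤ L + ε :=
          le_of_lt ((hβ' x.1).trans_le (by linarith [hL_le x.1]))
        have h2 : f (x.2 v0) v0 ≤ M + ε := le_of_lt ((hle_sup (x.2 v0) v0).trans_lt hv0)
        have e1 := mul_le_mul_of_nonneg_left h1 hp0
        have e2 := mul_le_mul_of_nonneg_left h2 hq0
        simp only [hF]; nlinarith
      exact (ciInf_le bddB_supF (v0, β)).trans hsup
    · apply le_ciInf
      intro y
      apply le_of_forall_pos_le_add
      intro ε hε
      obtain ⟨u0, hu0⟩ : ∃ u, L - ε < ⨅ v, f u v :=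
        exists_lt_of_lt_ciSup (show L - ε < L from sub_lt_self _ hε)
      have hα : ∀ v, ∃ u, (⨆ u', f u' v) - ε < f u v := fun v =>
        exists_lt_of_lt_ciSup (sub_lt_self _ hε)
      choose α hα' using hα
      have hx : F (u0, α) y ≤ ⨆ x, F x y := le_ciSup (bddA_F y) (u0, α)
      have h1 : L - ε ≤ f u0 (y.2 u0) := le_of_lt (hu0.trans_le (hinf_le u0 (y.2 u0)))
      have h2 : M - ε ≤ f (α y.1) y.1 :=
        (sub_le_sub_right (hM_le y.1) ε).trans (hα' y.1).le
      have e1 := mul_le_mul_of_nonneg_left h1 hp0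
      have e2 := mul_le_mul_of_nonneg_left h2 hq0
      have hFlow : p * (L - ε) + (1 - p) * (M - ε) ≤ F (u0, α) y := by
        simp only [hF]; nlinarith
      nlinarith [hFlow.trans hx]
  have key2 : (⨆ x : U × (V → U), ⨅ y : V × (U → V), F x y) = p * L + (1 - p) * M := by
    apply le_antisymm
    · apply ciSup_le
      intro x
      apply le_of_forall_pos_le_add
      intro ε hε
      obtain ⟨v0, hv0⟩ : ∃ v, (⨆ u, f u v) < M + ε :=
        exists_lt_of_ciInf_lt (lt_add_of_pos_right _ hε)
      have hβ : ∀ u, ∃ v, f u v < (⨅ v', f u v') + ε := fun u =>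
        exists_lt_of_ciInf_lt (lt_add_of_pos_right _ hε)
      choose β hβ' using hβ
      have hle : (⨅ y, F x y) ≤ F x (v0, β) := ciInf_le (bddB_F x) (v0, β)
      have h1 : f x.1 (β x.1) ≤ L + ε :=
        le_of_lt ((hβ' x.1).trans_le (by linarith [hL_le x.1]))
      have h2 : f (x.2 v0) v0 ≤ M + ε := le_of_lt ((hle_sup (x.2 v0) v0).trans_lt hv0)
      have e1 := mul_le_mul_of_nonneg_left h1 hp0
      have e2 := mul_le_mul_of_nonneg_left h2 hq0
      have hFx : F x (v0, β) ≤ p * L + (1 - p) * M + ε := by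
        simp only [hF]; nlinarith
      linarith [hle.trans hFx]
    · apply le_of_forall_pos_le_add
      intro ε hε
      obtain ⟨u0, hu0⟩ : ∃ u, L - ε < ⨅ v, f u v :=
        exists_lt_of_lt_ciSup (show L - ε < L from sub_lt_self _ hε)
      have hα : ∀ v, ∃ u, (⨆ u', f u' v) - ε < f u v := fun v =>
        exists_lt_of_lt_ciSup (sub_lt_self _ hε)
      choose α hα' using hα
      have hge : ∀ y, p * L + (1 - p) * M - ε ≤ F (u0, α) y := by
        intro y
        have h1 : L - ε ≤ f u0 (y.2 u0) := le_of_lt (hu0.trans_le (hinf_le u0 (y.2 u0)))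
        have h2 : M - ε ≤ f (α y.1) y.1 :=
          (sub_le_sub_right (hM_le y.1) ε).trans (hα' y.1).le
        have e1 := mul_le_mul_of_nonneg_left h1 hp0
        have e2 := mul_le_mul_of_nonneg_left h2 hq0
        simp only [hF]; nlinarith
      have hinf : p * L + (1 - p) * M - ε ≤ ⨅ y, F (u0, α) y := le_ciInf hge
      linarith [hinf.trans (le_ciSup bddA_infF (u0, α))]
  exact ⟨key1, key2.trans key1.symm⟩
end

section
/- Let U and V be nonempty sets, f : U × V → ℝ bounded, and p ∈ [0,1]. For every ε > 0 there exist u* ∈ U, α* : V → U, v* ∈ V, β* : U → V forming an ε-saddle point of the randomized-priority game: for all u ∈ U, α : V → U, v ∈ V, β : U → V one has p·f(u, β*(u)) + (1−p)·f(α(v*), v*) ≤ f^p + ε and p·f(u*, β(u*)) + (1−p)·f(α*(v), v) ≥ f^p − ε, where f^p := p·f⁻ + (1−p)·f⁺. -/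
/-- The randomized-priority one-shot game admits ε-saddle points
`(u*, α*), (v*, β*)` for every `ε > 0`. -/
theorem stmt4 {U V : Type*} [Nonempty U] [Nonempty V] (f : U → V → ℝ)
    (hf : ∃ C : ℝ, ∀ u v, |f u v| ≤ C)
    (p : ℝ) (hp0 : 0 ≤ p) (hp1 : p ≤ 1)
    (ε : ℝ) (hε : 0 < ε) :
    ∃ (ustar : U) (αstar : V → U) (vstar : V) (βstar : U → V),
      (∀ (u : U) (α : V → U),
        p * f u (βstar u) + (1 - p) * f (α vstar) vstar
          ≤ (p * (⨆ u : U, ⨅ v : V, f u v) + (1 - p) * (⨅ v : V, ⨆ u : U, f u v)) + ε) ∧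
      (∀ (v : V) (β : U → V),
        (p * (⨆ u : U, ⨅ v : V, f u v) + (1 - p) * (⨅ v : V, ⨆ u : U, f u v)) - ε
          ≤ p * f ustar (β ustar) + (1 - p) * f (αstar v) v) := by
  obtain ⟨C, hC⟩ := hf
  have hub : ∀ u v, f u v ≤ C := fun u v => (abs_le.mp (hC u v)).2
  have hlb : ∀ u v, -C ≤ f u v := fun u v => (abs_le.mp (hC u v)).1
  set g : U → ℝ := fun u => ⨅ v : V, f u v with hg
  set h : V → ℝ := fun v => ⨆ u : U, f u v with hh
  have hbddB : ∀ u, BddBelow (Set.range (f u)) := fun u =>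
    ⟨-C, fun x ⟨v, hv⟩ => hv ▸ hlb u v⟩
  have hbddA : ∀ v, BddAbove (Set.range (fun u => f u v)) := fun v =>
    ⟨C, fun x ⟨u, hu⟩ => hu ▸ hub u v⟩
  have hg_le : ∀ u v, g u ≤ f u v := fun u v => ciInf_le (hbddB u) v
  have hh_ge : ∀ u v, f u v ≤ h v := fun u v => le_ciSup (hbddA v) u
  have hgA : BddAbove (Set.range g) := by
    refine ⟨C, fun x ⟨u, hu⟩ => ?_⟩
    subst hu
    exact le_trans (hg_le u (Classical.arbitrary V)) (hub u _)
  have hhB : BddBelow (Set.range h) := by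
    refine ⟨-C, fun x ⟨v, hv⟩ => ?_⟩
    subst hv
    exact le_trans (hlb (Classical.arbitrary U) v) (hh_ge _ v)
  have hg_sup : ∀ u, g u ≤ ⨆ u : U, g u := fun u => le_ciSup hgA u
  have hh_inf : ∀ v, ⨅ v : V, h v ≤ h v := fun v => ciInf_le hhB v
  -- choose u*
  obtain ⟨ustar, hustar⟩ :=
    exists_lt_of_lt_ciSup (f := g) (by linarith : (⨆ u : U, g u) - ε < ⨆ u : U, g u)
  -- choose v*
  obtain ⟨vstar, hvstar⟩ :=
    exists_lt_of_ciInf_lt (f := h) (by linarith : ⨅ v : V, h v < (⨅ v : V, h v) + ε)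
  -- choose β* and α*
  have hβ : ∀ u, ∃ v, f u v < g u + ε := fun u =>
    exists_lt_of_ciInf_lt (by linarith [hε] : (⨅ v : V, f u v) < g u + ε)
  have hα : ∀ v, ∃ u, h v - ε < f u v := fun v =>
    exists_lt_of_lt_ciSup (by linarith [hε] : h v - ε < ⨆ u : U, f u v)
  choose βstar hβstar using hβ
  choose αstar hαstar using hα
  refine ⟨ustar, αstar, vstar, βstar, ?_, ?_⟩
  · intro u α
    have h1 : f u (βstar u) ≤ (⨆ u : U, g u) + ε := by
      have := hβstar u
      have := hg_sup u
      linarith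
    have h2 : f (α vstar) vstar ≤ (⨅ v : V, h v) + ε := by
      have := hh_ge (α vstar) vstar
      linarith
    nlinarith [mul_le_mul_of_nonneg_left h1 hp0,
      mul_le_mul_of_nonneg_left h2 (by linarith : (0:ℝ) ≤ 1 - p)]
  · intro v β
    have h1 : (⨆ u : U, g u) - ε ≤ f ustar (β ustar) := by
      have := hg_le ustar (β ustar)
      linarith
    have h2 : (⨅ v : V, h v) - ε ≤ f (αstar v) v := by
      have := hαstar v
      have := hh_inf v
      linarith
    nlinarith [mul_le_mul_of_nonneg_left h1 hp0,
      mul_le_mul_of_nonneg_left h2 (by linarith : (0:ℝ) ≤ 1 - p)]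
end

section
/- Let d, d' be positive integers, α ≥ 0 a real number, and X, Y real d × d matrices such that for all ξ, η ∈ ℝ^d one has ξᵀXξ − ηᵀYη ≤ 3α‖ξ − η‖². Then for all real d × d' matrices σ and τ one has Tr(σσᵀX) − Tr(ττᵀY) ≤ 3α‖σ − τ‖_F², where ‖·‖_F denotes the Frobenius norm. -/
open Matrix

lemma trace_col_sum (d d' : ℕ) (A : Matrix (Fin d) (Fin d') ℝ)
    (M : Matrix (Fin d) (Fin d) ℝ) :
    Matrix.trace (A * Aᵀ * M) =
      ∑ k, (fun i => A i k) ⬝ᵥ (M *ᵥ fun i => A i k) := by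
  simp only [Matrix.trace, Matrix.diag, Matrix.mul_apply, Matrix.transpose_apply,
    dotProduct, Matrix.mulVec, Finset.sum_mul, Finset.mul_sum]
  conv_lhs => enter [2, x]; rw [Finset.sum_comm]
  rw [Finset.sum_comm]
  conv_lhs => enter [2, k]; rw [Finset.sum_comm]
  refine Finset.sum_congr rfl fun k _ => Finset.sum_congr rfl fun i _ =>
    Finset.sum_congr rfl fun j _ => by ring

/-- The trace estimate underlying the structural condition (3.14) of
Crandall–Ishii–Lions: a quadratic-form inequality for `(X, Y)` implies the
corresponding trace inequality with the Frobenius norm. -/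
theorem stmt6 (d d' : ℕ) (hd : 0 < d) (hd' : 0 < d') (α : ℝ) (hα : 0 ≤ α)
    (X Y : Matrix (Fin d) (Fin d) ℝ)
    (hXY : ∀ ξ η : Fin d → ℝ,
      ξ ⬝ᵥ (X *ᵥ ξ) - η ⬝ᵥ (Y *ᵥ η) ≤ 3 * α * ∑ i, (ξ i - η i) ^ 2)
    (σ τ : Matrix (Fin d) (Fin d') ℝ) :
    Matrix.trace (σ * σᵀ * X) - Matrix.trace (τ * τᵀ * Y)
      ≤ 3 * α * ∑ i, ∑ k, (σ i k - τ i k) ^ 2 := by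
  rw [trace_col_sum, trace_col_sum, ← Finset.sum_sub_distrib,
    Finset.sum_comm (f := fun i k => (σ i k - τ i k) ^ 2), Finset.mul_sum]
  exact Finset.sum_le_sum fun k _ => hXY (fun i => σ i k) (fun i => τ i k)
end

section
/- Let X be a second-countable topological space and let 𝒰 be a nonempty family of continuous functions w : X → ℝ that is uniformly bounded below (there is C ∈ ℝ with w(x) ≥ C for all w ∈ 𝒰 and x ∈ X) and closed under pointwise minimum (w, w' ∈ 𝒰 implies min(w, w') ∈ 𝒰). Then there exists a sequence (wₙ) of elements of 𝒰, pointwise nonincreasing in n, such that inf_n wₙ(x) = inf_{w ∈ 𝒰} w(x) for every x ∈ X. -/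
/-- Countable reduction (Bayraktar–Sîrbu, Proposition 4.1): a nonempty family
of continuous functions on a second-countable space, uniformly bounded below
and closed under pointwise minimum, contains a pointwise nonincreasing
sequence converging pointwise to the pointwise infimum of the family. -/
theorem stmt12 {X : Type*} [TopologicalSpace X] [SecondCountableTopology X]
    (𝒰 : Set (X → ℝ)) (hne : 𝒰.Nonempty)
    (hcont : ∀ w ∈ 𝒰, Continuous w)
    (hbdd : ∃ C : ℝ, ∀ w ∈ 𝒰, ∀ x, C ≤ w x)
    (hmin : ∀ w ∈ 𝒰, ∀ w' ∈ 𝒰, (fun x => min (w x) (w' x)) ∈ 𝒰) :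
    ∃ w : ℕ → X → ℝ, (∀ n, w n ∈ 𝒰) ∧ (∀ n x, w (n + 1) x ≤ w n x) ∧
      ∀ x, (⨅ n, w n x) = ⨅ u : 𝒰, (u : X → ℝ) x := by
  classical
  obtain ⟨C, hC⟩ := hbdd
  have hT : ∀ q : ℚ, ∃ T : Set 𝒰, T.Countable ∧
      (⋃ v ∈ T, {x | (v : X → ℝ) x < (q : ℝ)}) = ⋃ v : 𝒰, {x | (v : X → ℝ) x < (q : ℝ)} :=
    fun q => TopologicalSpace.isOpen_iUnion_countable _
      (fun v => isOpen_lt (hcont v v.2) continuous_const)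
  choose T hTc hTeq using hT
  obtain ⟨w₀, hw₀⟩ := hne
  set V : Set 𝒰 := insert ⟨w₀, hw₀⟩ (⋃ q : ℚ, T q) with hV
  have hVc : V.Countable := (Set.countable_iUnion hTc).insert _
  haveI : Nonempty 𝒰 := ⟨⟨w₀, hw₀⟩⟩
  obtain ⟨f, hf⟩ := hVc.exists_eq_range ⟨_, Set.mem_insert _ _⟩
  let u : ℕ → X → ℝ := fun n => ((f n : 𝒰) : X → ℝ)
  have hu : ∀ n, u n ∈ 𝒰 := fun n => (f n).2
  let w : ℕ → X → ℝ := fun n =>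
    Nat.rec (u 0) (fun n wn => fun x => min (wn x) (u (n + 1) x)) n
  have hwmem : ∀ n, w n ∈ 𝒰 := by
    intro n
    induction n with
    | zero => exact hu 0
    | succ n ih => exact hmin _ ih _ (hu (n + 1))
  have hwmono : ∀ n x, w (n + 1) x ≤ w n x := fun n x => min_le_left _ _
  have hwle : ∀ n x, w n x ≤ u n x := by
    intro n x
    cases n with
    | zero => exact le_rfl
    | succ n => exact min_le_right _ _
  have bddU : ∀ x : X, BddBelow (Set.range fun v : 𝒰 => (v : X → ℝ) x) := by
    intro x
    exact ⟨C, by rintro y ⟨v, rfl⟩; exact hC v v.2 x⟩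
  have bddW : ∀ x : X, BddBelow (Set.range fun n => w n x) := by
    intro x
    exact ⟨C, by rintro y ⟨n, rfl⟩; exact hC _ (hwmem n) x⟩
  refine ⟨w, hwmem, hwmono, fun x => le_antisymm ?_ ?_⟩
  · -- ⨅ n, w n x ≤ ⨅ v : 𝒰, v x
    by_contra h
    push_neg at h
    obtain ⟨q, hq1, hq2⟩ := exists_rat_btwn h
    -- there is v ∈ 𝒰 with v x < q
    obtain ⟨v, hvx⟩ : ∃ v : 𝒰, (v : X → ℝ) x < (q : ℝ) := by
      by_contra hv
      push_neg at hv
      exact absurd (le_ciInf fun v => hv v) (not_le.2 hq1)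
    have hxU : x ∈ ⋃ v : 𝒰, {x | (v : X → ℝ) x < (q : ℝ)} :=
      Set.mem_iUnion.2 ⟨v, hvx⟩
    rw [← hTeq q] at hxU
    obtain ⟨v', hv'T, hv'x⟩ := Set.mem_iUnion₂.1 hxU
    have hv'V : v' ∈ V := Set.mem_insert_iff.2 (Or.inr (Set.mem_iUnion.2 ⟨q, hv'T⟩))
    rw [hf] at hv'V
    obtain ⟨m, hm⟩ := hv'V
    have h1 : w m x < (q : ℝ) := lt_of_le_of_lt (hm ▸ hwle m x) hv'x
    have h2 : (⨅ n, w n x) ≤ w m x := ciInf_le (bddW x) m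
    exact absurd (h2.trans h1.le) (not_le.2 hq2)
  · -- ⨅ v : 𝒰, v x ≤ ⨅ n, w n x
    exact le_ciInf fun n => ciInf_le (bddU x) ⟨w n, hwmem n⟩
end

section
/- Let (Ω, 𝒜, μ) be a probability space, 𝒢 ⊆ ℋ ⊆ 𝒜 sub-σ-algebras, Z₁, Z₂ : Ω → ℝ integrable and ℋ-measurable, P : Ω → [0,1] 𝒢-measurable, and ζ : Ω → [0,1] a random variable uniformly distributed on [0,1] and independent of ℋ. Then almost surely E[ 1_{ζ ≤ P}·Z₁ + 1_{ζ > P}·Z₂ | 𝒢 ] = P·E[Z₁ | 𝒢] + (1 − P)·E[Z₂ | 𝒢]. -/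
open MeasureTheory ProbabilityTheory

lemma key_avg {Ω : Type*} (mℋ : MeasurableSpace Ω) {mΩ : MeasurableSpace Ω}
    (μ : Measure Ω) [IsProbabilityMeasure μ] (hℋ : mℋ ≤ mΩ)
    (P W : Ω → ℝ) (hPm : Measurable[mℋ] P) (hP0 : ∀ ω, 0 ≤ P ω) (hP1 : ∀ ω, P ω ≤ 1)
    (hWm : Measurable[mℋ] W) (hW : Integrable W μ)
    (ζ : Ω → ℝ) (hζ : Measurable[mΩ] ζ)
    (hunif : Measure.map ζ μ = volume.restrict (Set.Icc (0:ℝ) 1))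
    (hindep : Indep (MeasurableSpace.comap ζ (borel ℝ)) mℋ μ) :
    ∫ ω, (if ζ ω ≤ P ω then W ω else 0) ∂μ = ∫ ω, P ω * W ω ∂μ := by
  set g : Ω → ℝ × ℝ := fun ω => (P ω, W ω) with hgdef
  have hg : Measurable[mℋ] g := hPm.prodMk hWm
  have hgΩ : Measurable[mΩ] g := hg.mono hℋ le_rfl
  have hgζ : IndepFun g ζ μ :=
    Indep.symm (indep_of_indep_of_le_right hindep (measurable_iff_comap_le.mp hg))
  have hmap : μ.map (fun ω => (g ω, ζ ω)) = (μ.map g).prod (μ.map ζ) :=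
    (indepFun_iff_map_prod_eq_prod_map_map hgΩ.aemeasurable hζ.aemeasurable).mp hgζ
  set F : (ℝ × ℝ) × ℝ → ℝ := fun q => if q.2 ≤ q.1.1 then q.1.2 else 0 with hFdef
  have hFm : Measurable F :=
    Measurable.ite (measurableSet_le measurable_snd measurable_fst.fst)
      measurable_fst.snd measurable_const
  haveI : IsProbabilityMeasure (Measure.map ζ μ) := by
    rw [hunif]
    exact ⟨by simp [Real.volume_Icc]⟩
  have hW2 : Integrable (fun y : ℝ × ℝ => y.2) (μ.map g) :=
    (integrable_map_measure measurable_snd.aestronglyMeasurable hgΩ.aemeasurable).mpr hW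
  have hbound : Integrable
      (fun z : (ℝ × ℝ) × ℝ => (fun y : ℝ × ℝ => y.2) z.1 * (fun _ : ℝ => (1:ℝ)) z.2)
      ((μ.map g).prod (μ.map ζ)) := hW2.mul_prod (integrable_const 1)
  have hFint : Integrable F ((μ.map g).prod (μ.map ζ)) := by
    refine Integrable.mono' hbound.norm hFm.aestronglyMeasurable (ae_of_all _ fun q => ?_)
    by_cases h : q.2 ≤ q.1.1 <;> simp [hFdef, h]
  have hae : ∀ᵐ y ∂(μ.map g), y.1 ∈ Set.Icc (0:ℝ) 1 := by
    rw [ae_map_iff hgΩ.aemeasurable (measurable_fst (measurableSet_Icc))]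
    exact ae_of_all _ fun ω => ⟨hP0 ω, hP1 ω⟩
  calc ∫ ω, (if ζ ω ≤ P ω then W ω else 0) ∂μ
      = ∫ q, F q ∂(μ.map (fun ω => (g ω, ζ ω))) :=
        (integral_map (hgΩ.prodMk hζ).aemeasurable hFm.aestronglyMeasurable).symm
    _ = ∫ q, F q ∂((μ.map g).prod (μ.map ζ)) := by rw [hmap]
    _ = ∫ y, ∫ x, F (y, x) ∂(μ.map ζ) ∂(μ.map g) := integral_prod F hFint
    _ = ∫ y : ℝ × ℝ, y.1 * y.2 ∂(μ.map g) := by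
        refine integral_congr_ae ?_
        filter_upwards [hae] with y hy
        have hind : (fun x => F (y, x)) = Set.indicator (Set.Iic y.1) (fun _ => y.2) := by
          funext x
          simp [hFdef, Set.indicator_apply, Set.mem_Iic]
        have hset : Set.Iic y.1 ∩ Set.Icc (0:ℝ) 1 = Set.Icc 0 y.1 := by
          ext x
          simp only [Set.mem_inter_iff, Set.mem_Iic, Set.mem_Icc]
          exact ⟨fun h => ⟨h.2.1, h.1⟩, fun h => ⟨h.2, h.1, h.2.trans hy.2⟩⟩
        simp only [hind, hunif, integral_indicator measurableSet_Iic,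
          setIntegral_const, Measure.restrict_restrict measurableSet_Iic, hset,
          Measure.restrict_apply MeasurableSet.univ, Set.univ_inter, Real.volume_Icc,
          sub_zero, ENNReal.toReal_ofReal hy.1, Real.volume_real_Icc_of_le hy.1, smul_eq_mul]
    _ = ∫ ω, P ω * W ω ∂μ :=
        integral_map hgΩ.aemeasurable
          ((continuous_fst.mul continuous_snd).aestronglyMeasurable)



theorem stmt13' {Ω : Type*} (m𝒢 mℋ : MeasurableSpace Ω) {mΩ : MeasurableSpace Ω}
    (μ : Measure Ω) [IsProbabilityMeasure μ]
    (h𝒢ℋ : m𝒢 ≤ mℋ) (hℋ : mℋ ≤ mΩ)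
    (Z₁ Z₂ : Ω → ℝ) (hZ₁ : Integrable Z₁ μ) (hZ₂ : Integrable Z₂ μ)
    (hZ₁m : StronglyMeasurable[mℋ] Z₁) (hZ₂m : StronglyMeasurable[mℋ] Z₂)
    (P : Ω → ℝ) (hPm : Measurable[m𝒢] P)
    (hP0 : ∀ ω, 0 ≤ P ω) (hP1 : ∀ ω, P ω ≤ 1)
    (ζ : Ω → ℝ) (hζ : Measurable[mΩ] ζ)
    (hunif : Measure.map ζ μ = volume.restrict (Set.Icc (0 : ℝ) 1))
    (hindep : Indep (MeasurableSpace.comap ζ (borel ℝ)) mℋ μ) :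
    μ[(fun ω => if ζ ω ≤ P ω then Z₁ ω else Z₂ ω)|m𝒢]
      =ᵐ[μ] fun ω => P ω * (μ[Z₁|m𝒢]) ω + (1 - P ω) * (μ[Z₂|m𝒢]) ω := by
  have h𝒢 : m𝒢 ≤ mΩ := h𝒢ℋ.trans hℋ
  have hPℋ : Measurable[mℋ] P := hPm.mono h𝒢ℋ le_rfl
  have hPΩ : Measurable[mΩ] P := hPm.mono h𝒢 le_rfl
  have hZ₁Ω : Measurable[mΩ] Z₁ := hZ₁m.measurable.mono hℋ le_rfl
  have hZ₂Ω : Measurable[mΩ] Z₂ := hZ₂m.measurable.mono hℋ le_rfl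
  set f : Ω → ℝ := fun ω => if ζ ω ≤ P ω then Z₁ ω else Z₂ ω with hfdef
  have hfm : Measurable[mΩ] f :=
    Measurable.ite (measurableSet_le hζ hPΩ) hZ₁Ω hZ₂Ω
  have hfint : Integrable f μ := by
    refine Integrable.mono' (hZ₁.norm.add hZ₂.norm) hfm.aestronglyMeasurable
      (ae_of_all _ fun ω => ?_)
    by_cases h : ζ ω ≤ P ω <;>
      simp only [hfdef, h, if_true, if_false] <;>
      [exact le_add_of_nonneg_right (norm_nonneg _);
       exact le_add_of_nonneg_left (norm_nonneg _)]
  have hPbd : ∃ C, ∀ ω, ‖P ω‖ ≤ C :=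
    ⟨1, fun ω => by rw [Real.norm_eq_abs, abs_le]; exact ⟨le_trans (by norm_num) (hP0 ω), hP1 ω⟩⟩
  have h1Pbd : ∃ C, ∀ ω, ‖1 - P ω‖ ≤ C :=
    ⟨1, fun ω => by
      rw [Real.norm_eq_abs, abs_le]
      constructor <;> nlinarith [hP0 ω, hP1 ω]⟩
  have hPZ₁ : Integrable (P * Z₁) μ := hZ₁.bdd_mul hPΩ.aestronglyMeasurable (ae_of_all _ hPbd.choose_spec)
  have h1PZ₂ : Integrable ((fun ω => 1 - P ω) * Z₂) μ :=
    hZ₂.bdd_mul (measurable_const.sub hPΩ).aestronglyMeasurable (ae_of_all _ h1Pbd.choose_spec)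
  have h₁ : μ[P * Z₁|m𝒢] =ᵐ[μ] P * μ[Z₁|m𝒢] :=
    condExp_mul_of_stronglyMeasurable_left hPm.stronglyMeasurable hPZ₁ hZ₁
  have h₂ : μ[(fun ω => 1 - P ω) * Z₂|m𝒢] =ᵐ[μ] (fun ω => 1 - P ω) * μ[Z₂|m𝒢] :=
    condExp_mul_of_stronglyMeasurable_left (measurable_const.sub hPm).stronglyMeasurable h1PZ₂ hZ₂
  have hgint : Integrable (fun ω => P ω * (μ[Z₁|m𝒢]) ω + (1 - P ω) * (μ[Z₂|m𝒢]) ω) μ := by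
    exact (integrable_condExp.bdd_mul hPΩ.aestronglyMeasurable (ae_of_all _ hPbd.choose_spec)).add
      (integrable_condExp.bdd_mul (measurable_const.sub hPΩ).aestronglyMeasurable (ae_of_all _ h1Pbd.choose_spec))
  refine (ae_eq_condExp_of_forall_setIntegral_eq h𝒢 hfint
    (fun s _ _ => hgint.integrableOn) (fun s hs _ => ?_) ?_).symm
  · -- ∫ x in s, g = ∫ x in s, f
    have hsΩ : MeasurableSet[mΩ] s := h𝒢 s hs
    set W : Ω → ℝ := Set.indicator s (fun ω => Z₁ ω - Z₂ ω) with hWdef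
    have hWm : Measurable[mℋ] W :=
      (hZ₁m.measurable.sub hZ₂m.measurable).indicator (h𝒢ℋ s hs)
    have hWint : Integrable W μ := (hZ₁.sub hZ₂).indicator hsΩ
    have hkey := key_avg mℋ μ hℋ P W hPℋ hP0 hP1 hWm hWint ζ hζ hunif hindep
    have hsplit : ∀ ω, Set.indicator s f ω
        = (if ζ ω ≤ P ω then W ω else 0) + Set.indicator s Z₂ ω := by
      intro ω
      by_cases hωs : ω ∈ s <;> by_cases h : ζ ω ≤ P ω <;>
        simp [hfdef, hWdef, Set.indicator_apply, hωs, h]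
    have hifint : Integrable (fun ω => if ζ ω ≤ P ω then W ω else 0) μ := by
      refine Integrable.mono' hWint.norm
        (Measurable.aestronglyMeasurable
          (Measurable.ite (measurableSet_le hζ hPΩ) (hWm.mono hℋ le_rfl) measurable_const))
        (ae_of_all _ fun ω => ?_)
      by_cases h : ζ ω ≤ P ω <;> simp [h]
    have hrhs : ∫ x in s, f x ∂μ
        = ∫ ω, P ω * W ω ∂μ + ∫ x in s, Z₂ x ∂μ := by
      rw [← integral_indicator hsΩ, ← integral_indicator hsΩ (f := Z₂), ← hkey,
        ← integral_add hifint (hZ₂.indicator hsΩ)]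
      exact integral_congr_ae (ae_of_all _ hsplit)
    have hPW : ∀ ω, P ω * W ω = Set.indicator s (fun ω => P ω * Z₁ ω - P ω * Z₂ ω) ω := by
      intro ω
      by_cases hωs : ω ∈ s <;> simp [hWdef, Set.indicator_apply, hωs, mul_sub]
    calc ∫ x in s, (P x * (μ[Z₁|m𝒢]) x + (1 - P x) * (μ[Z₂|m𝒢]) x) ∂μ
        = ∫ x in s, P x * (μ[Z₁|m𝒢]) x ∂μ + ∫ x in s, (1 - P x) * (μ[Z₂|m𝒢]) x ∂μ := by
          refine integral_add ?_ ?_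
          · exact (integrable_condExp.bdd_mul hPΩ.aestronglyMeasurable (ae_of_all _ hPbd.choose_spec)).integrableOn
          · exact (integrable_condExp.bdd_mul
              (measurable_const.sub hPΩ).aestronglyMeasurable (ae_of_all _ h1Pbd.choose_spec)).integrableOn
      _ = ∫ x in s, (μ[P * Z₁|m𝒢]) x ∂μ + ∫ x in s, (μ[(fun ω => 1 - P ω) * Z₂|m𝒢]) x ∂μ := by
          have a1 : ∫ x in s, (μ[P * Z₁|m𝒢]) x ∂μ = ∫ x in s, P x * (μ[Z₁|m𝒢]) x ∂μ :=
            setIntegral_congr_ae hsΩ (h₁.mono fun ω hω _ => hω)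
          have a2 : ∫ x in s, (μ[(fun ω => 1 - P ω) * Z₂|m𝒢]) x ∂μ
              = ∫ x in s, (1 - P x) * (μ[Z₂|m𝒢]) x ∂μ :=
            setIntegral_congr_ae hsΩ (h₂.mono fun ω hω _ => hω)
          rw [a1, a2]
      _ = ∫ x in s, (P x * Z₁ x) ∂μ + ∫ x in s, ((1 - P x) * Z₂ x) ∂μ := by
          rw [setIntegral_condExp h𝒢 hPZ₁ hs, setIntegral_condExp h𝒢 h1PZ₂ hs]
          rfl
      _ = ∫ x in s, f x ∂μ := by
          have hPZ₂ : Integrable (P * Z₂) μ := hZ₂.bdd_mul hPΩ.aestronglyMeasurable (ae_of_all _ hPbd.choose_spec)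
          have e1 : ∫ ω, P ω * W ω ∂μ
              = ∫ x in s, P x * Z₁ x ∂μ - ∫ x in s, P x * Z₂ x ∂μ := by
            calc ∫ ω, P ω * W ω ∂μ
                = ∫ ω, Set.indicator s (fun ω => P ω * Z₁ ω - P ω * Z₂ ω) ω ∂μ :=
                  integral_congr_ae (ae_of_all _ hPW)
              _ = ∫ x in s, (P x * Z₁ x - P x * Z₂ x) ∂μ := integral_indicator hsΩ
              _ = ∫ x in s, P x * Z₁ x ∂μ - ∫ x in s, P x * Z₂ x ∂μ :=
                  integral_sub hPZ₁.integrableOn hPZ₂.integrableOn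
          have e2 : ∫ x in s, (1 - P x) * Z₂ x ∂μ
              = ∫ x in s, Z₂ x ∂μ - ∫ x in s, P x * Z₂ x ∂μ := by
            calc ∫ x in s, (1 - P x) * Z₂ x ∂μ
                = ∫ x in s, (Z₂ x - P x * Z₂ x) ∂μ :=
                  integral_congr_ae (ae_of_all _ fun ω => by ring)
              _ = ∫ x in s, Z₂ x ∂μ - ∫ x in s, P x * Z₂ x ∂μ :=
                  integral_sub hZ₂.integrableOn hPZ₂.integrableOn
          rw [hrhs, e1, e2]
          ring
  · exact StronglyMeasurable.aestronglyMeasurable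
      ((hPm.stronglyMeasurable.mul stronglyMeasurable_condExp).add
        ((measurable_const.sub hPm).stronglyMeasurable.mul stronglyMeasurable_condExp))

/-- Averaging out an independent uniform coin toss: conditioning on `𝒢`, the
payoff `1_{ζ ≤ P}·Z₁ + 1_{ζ > P}·Z₂` becomes the convex combination
`P·E[Z₁|𝒢] + (1−P)·E[Z₂|𝒢]`. -/
theorem stmt13 {Ω : Type*} {mΩ : MeasurableSpace Ω} (μ : Measure Ω)
    [IsProbabilityMeasure μ]
    (m𝒢 mℋ : MeasurableSpace Ω) (h𝒢ℋ : m𝒢 ≤ mℋ) (hℋ : mℋ ≤ mΩ)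
    (Z₁ Z₂ : Ω → ℝ) (hZ₁ : Integrable Z₁ μ) (hZ₂ : Integrable Z₂ μ)
    (hZ₁m : StronglyMeasurable[mℋ] Z₁) (hZ₂m : StronglyMeasurable[mℋ] Z₂)
    (P : Ω → ℝ) (hPm : Measurable[m𝒢] P)
    (hP0 : ∀ ω, 0 ≤ P ω) (hP1 : ∀ ω, P ω ≤ 1)
    (ζ : Ω → ℝ) (hζ : Measurable[mΩ] ζ)
    (hunif : @Measure.map Ω ℝ mΩ _ ζ μ = volume.restrict (Set.Icc (0 : ℝ) 1))
    (hindep : Indep (MeasurableSpace.comap ζ (borel ℝ)) mℋ μ) :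
    μ[(fun ω => if ζ ω ≤ P ω then Z₁ ω else Z₂ ω)|m𝒢]
      =ᵐ[μ] fun ω => P ω * (μ[Z₁|m𝒢]) ω + (1 - P ω) * (μ[Z₂|m𝒢]) ω :=
  stmt13' m𝒢 mℋ μ h𝒢ℋ hℋ Z₁ Z₂ hZ₁ hZ₂ hZ₁m hZ₂m P hPm hP0 hP1 ζ hζ hunif hindep
end
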